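/- (Discrete entropy conservation condition for the explicit entropy-conservative GLM-MHD flux.) Fix γ > 1 and c_h ∈ ℝ. Let two GLM-MHD states (ρ_X, v_X, p_X, B_X, ψ_X), X ∈ {L, R}, be given with ρ_X > 0, p_X > 0, ρ_L ≠ ρ_R and β_L ≠ β_R. Define f^ec ∈ ℝ⁹ componentwise by: f₁ = ρ^ln·{v₁}; f₂ = ρ^ln·{v₁}² − {B₁}² + p̄ + ½({B₁B₁} + {B₂B₂} + {B₃B₃}); f₃ = ρ^ln·{v₁}{v₂} − {B₁}{B₂}; f₄ = ρ^ln·{v₁}{v₃} − {B₁}{B₃}; f₆ = c_h{ψ}; f₇ = {v₁}{B₂} − {v₂}{B₁}; f₈ = {v₁}{B₃} − {v₃}{B₁}; f₉ = c_h{B₁}; and f₅ = f₁·[1/(2(γ−1)β^ln) − ½({v₁²} + {v₂²} + {v₃²})] + f₂{v₁} + f₃{v₂} + f₄{v₃} + f₆{B₁} + f₇{B₂} + f₈{B₃} + f₉{ψ} − ½({v₁B₁²} + {v₁B₂²} + {v₁B₃²}) + {v₁B₁}{B₁} + {v₂B₂}{B₁} + {v₃B₃}{B₁} − c_h{B₁ψ},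 where p̄ := {ρ}/(2{β}) and all jumps, means and logarithmic means are taken between the L and R states. Then ⟦w⟧ᵀ f^ec = ⟦Ψ₁⟧ − {B₁}·⟦Φ⟧, where Ψ₁ := wᵀ f₁^a − v₁S + Φ·B₁ is the x-direction entropy flux potential and Φ := 2β(v·B). -/

import Mathlib

open Matrix

/-- The logarithmic mean `a^ln = (b − a)/(log b − log a)`. -/
noncomputable def lnMean (a b : ℝ) : ℝ := (b - a) / (Real.log b - Real.log a)

/-- The arithmetic mean `{a} = (a_L + a_R)/2`. -/
noncomputable def avg (a b : ℝ) : ℝ := (a + b) / 2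

/-- The entropy variables `w` of a GLM-MHD state. -/
noncomputable def entW9 (γ ρ p ψ : ℝ) (v B : Fin 3 → ℝ) : Fin 9 → ℝ :=
  let β : ℝ := ρ / (2 * p)
  let s : ℝ := Real.log (p * ρ ^ (-γ))
  ![(γ - s) / (γ - 1) - β * ∑ k, (v k) ^ 2,
    2 * β * v 0, 2 * β * v 1, 2 * β * v 2,
    -(2 * β),
    2 * β * B 0, 2 * β * B 1, 2 * β * B 2,
    2 * β * ψ]

/-- The `x`-direction advective GLM-MHD flux `f₁^a`. -/
noncomputable def fadv1 (γ c_h ρ p ψ : ℝ) (v B : Fin 3 → ℝ) : Fin 9 → ℝ :=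
  ![ρ * v 0,
    ρ * (v 0) ^ 2 + p + (1/2) * (∑ k, (B k) ^ 2) - (B 0) ^ 2,
    ρ * v 0 * v 1 - B 0 * B 1,
    ρ * v 0 * v 2 - B 0 * B 2,
    v 0 * ((1/2) * ρ * (∑ k, (v k) ^ 2) + γ * p / (γ - 1) + ∑ k, (B k) ^ 2)
      - B 0 * (∑ k, v k * B k) + c_h * ψ * B 0,
    c_h * ψ,
    v 0 * B 1 - v 1 * B 0,
    v 0 * B 2 - v 2 * B 0,
    c_h * B 0]

/-- The contracted Janhunen nonconservative term `Φ = 2β(v·B)`. -/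
noncomputable def PhiJ (ρ p : ℝ) (v B : Fin 3 → ℝ) : ℝ :=
  2 * (ρ / (2 * p)) * ∑ k, v k * B k

/-- The entropy function `S = −ρs/(γ−1)` with `s = log (p ρ^(−γ))`. -/
noncomputable def entS9 (γ ρ p : ℝ) : ℝ :=
  -(ρ * Real.log (p * ρ ^ (-γ))) / (γ - 1)

/-- The `x`-direction entropy flux potential `Ψ₁ = wᵀ f₁^a − v₁ S + Φ B₁`. -/
noncomputable def Psi1 (γ c_h ρ p ψ : ℝ) (v B : Fin 3 → ℝ) : ℝ :=
  (∑ a, entW9 γ ρ p ψ v B a * fadv1 γ c_h ρ p ψ v B a)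
    - v 0 * entS9 γ ρ p + PhiJ ρ p v B * B 0

/-- The explicit entropy-conservative GLM-MHD numerical flux `f^ec` in the
`x`-direction between a left and a right state. -/
noncomputable def fluxEC (γ c_h : ℝ)
    (ρL pL ψL : ℝ) (vL BL : Fin 3 → ℝ)
    (ρR pR ψR : ℝ) (vR BR : Fin 3 → ℝ) : Fin 9 → ℝ :=
  let βL : ℝ := ρL / (2 * pL)
  let βR : ℝ := ρR / (2 * pR)
  let ρln : ℝ := lnMean ρL ρR
  let βln : ℝ := lnMean βL βR
  let pbar : ℝ := avg ρL ρR / (2 * avg βL βR)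
  let f1 : ℝ := ρln * avg (vL 0) (vR 0)
  let f2 : ℝ := ρln * (avg (vL 0) (vR 0)) ^ 2 - (avg (BL 0) (BR 0)) ^ 2 + pbar
    + (1/2) * (avg (BL 0 * BL 0) (BR 0 * BR 0) + avg (BL 1 * BL 1) (BR 1 * BR 1)
        + avg (BL 2 * BL 2) (BR 2 * BR 2))
  let f3 : ℝ := ρln * avg (vL 0) (vR 0) * avg (vL 1) (vR 1)
    - avg (BL 0) (BR 0) * avg (BL 1) (BR 1)
  let f4 : ℝ := ρln * avg (vL 0) (vR 0) * avg (vL 2) (vR 2)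
    - avg (BL 0) (BR 0) * avg (BL 2) (BR 2)
  let f6 : ℝ := c_h * avg ψL ψR
  let f7 : ℝ := avg (vL 0) (vR 0) * avg (BL 1) (BR 1)
    - avg (vL 1) (vR 1) * avg (BL 0) (BR 0)
  let f8 : ℝ := avg (vL 0) (vR 0) * avg (BL 2) (BR 2)
    - avg (vL 2) (vR 2) * avg (BL 0) (BR 0)
  let f9 : ℝ := c_h * avg (BL 0) (BR 0)
  let f5 : ℝ :=
    f1 * (1 / (2 * (γ - 1) * βln)
        - (1/2) * (avg ((vL 0) ^ 2) ((vR 0) ^ 2) + avg ((vL 1) ^ 2) ((vR 1) ^ 2)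
            + avg ((vL 2) ^ 2) ((vR 2) ^ 2)))
    + f2 * avg (vL 0) (vR 0) + f3 * avg (vL 1) (vR 1) + f4 * avg (vL 2) (vR 2)
    + f6 * avg (BL 0) (BR 0) + f7 * avg (BL 1) (BR 1) + f8 * avg (BL 2) (BR 2)
    + f9 * avg ψL ψR
    - (1/2) * (avg (vL 0 * (BL 0) ^ 2) (vR 0 * (BR 0) ^ 2)
        + avg (vL 0 * (BL 1) ^ 2) (vR 0 * (BR 1) ^ 2)
        + avg (vL 0 * (BL 2) ^ 2) (vR 0 * (BR 2) ^ 2))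
    + avg (vL 0 * BL 0) (vR 0 * BR 0) * avg (BL 0) (BR 0)
    + avg (vL 1 * BL 1) (vR 1 * BR 1) * avg (BL 0) (BR 0)
    + avg (vL 2 * BL 2) (vR 2 * BR 2) * avg (BL 0) (BR 0)
    - c_h * avg (BL 0 * ψL) (BR 0 * ψR)
  ![f1, f2, f3, f4, f5, f6, f7, f8, f9]

/-! Once the first entropy variable is written as
`w₁ = log ρ + (γ + log 2 + log β)/(γ − 1) − β‖v‖²`, and the entropy terms of `Ψ₁` are seen to
cancel (`Ψ₁ = ρv₁ + βv₁‖B‖² + 2βc_hψB₁`), the identity is polynomial except for three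
relations: `ρ^ln ⟦log ρ⟧ = ⟦ρ⟧`, `⟦β⟧ / β^ln = ⟦log β⟧` and `p̄ · 2{β} = {ρ}`, of which it is
a linear combination. -/

lemma lnMean_mul_log_sub_log {a b : ℝ} (ha : 0 < a) (hb : 0 < b) (hab : a ≠ b) :
    lnMean a b * (Real.log b - Real.log a) = b - a :=
  div_mul_cancel₀ _ (sub_ne_zero.2 fun h => hab (Real.log_injOn_pos hb ha h).symm)

lemma sub_div_lnMean {a b : ℝ} (hab : a ≠ b) :
    (b - a) / lnMean a b = Real.log b - Real.log a :=
  div_div_cancel₀ (sub_ne_zero.2 hab.symm)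

lemma entW9_zero_eq (γ ψ : ℝ) {ρ p : ℝ} (hγ : γ ≠ 1) (hρ : 0 < ρ) (hp : 0 < p)
    (v B : Fin 3 → ℝ) :
    entW9 γ ρ p ψ v B 0 = Real.log ρ + (γ + Real.log 2 + Real.log (ρ / (2 * p))) / (γ - 1)
      - ρ / (2 * p) * ∑ k, v k ^ 2 := by
  have hγ' : γ - 1 ≠ 0 := sub_ne_zero.2 hγ
  simp only [entW9, Matrix.cons_val_zero]
  rw [Real.log_mul hp.ne' (by positivity), Real.log_rpow hρ, Real.log_div hρ.ne' (by positivity),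
    Real.log_mul two_ne_zero hp.ne']
  field_simp
  ring

lemma Psi1_eq (γ c_h ψ : ℝ) {ρ p : ℝ} (hp : p ≠ 0) (v B : Fin 3 → ℝ) :
    Psi1 γ c_h ρ p ψ v B = ρ * v 0 + ρ / (2 * p) * v 0 * ∑ k, B k ^ 2
      + 2 * (ρ / (2 * p)) * c_h * ψ * B 0 := by
  simp only [Psi1, entW9, fadv1, entS9, PhiJ, Fin.sum_univ_succ, Fin.sum_univ_zero,
    Matrix.cons_val_zero, Matrix.cons_val_succ, Fin.succ_zero_eq_one, Fin.succ_one_eq_two]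
  field_simp
  ring

/-- **Discrete entropy conservation condition** for the explicit
entropy-conservative GLM-MHD flux:
`⟦w⟧ᵀ f^ec = ⟦Ψ₁⟧ − {B₁}·⟦Φ⟧`. -/
theorem fluxEC_entropy_conservation
    (γ c_h : ℝ) (hγ : 1 < γ)
    (ρL pL ψL : ℝ) (vL BL : Fin 3 → ℝ)
    (ρR pR ψR : ℝ) (vR BR : Fin 3 → ℝ)
    (hρL : 0 < ρL) (hρR : 0 < ρR) (hpL : 0 < pL) (hpR : 0 < pR)
    (hρne : ρL ≠ ρR) (hβne : ρL / (2 * pL) ≠ ρR / (2 * pR)) :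
    (∑ a, (entW9 γ ρR pR ψR vR BR a - entW9 γ ρL pL ψL vL BL a)
        * fluxEC γ c_h ρL pL ψL vL BL ρR pR ψR vR BR a)
      = (Psi1 γ c_h ρR pR ψR vR BR - Psi1 γ c_h ρL pL ψL vL BL)
        - avg (BL 0) (BR 0) * (PhiJ ρR pR vR BR - PhiJ ρL pL vL BL) := by
  have hρln := lnMean_mul_log_sub_log hρL hρR hρne
  have hβln := sub_div_lnMean hβne
  have hpbar : avg ρL ρR / (2 * avg (ρL / (2 * pL)) (ρR / (2 * pR)))
      * (2 * avg (ρL / (2 * pL)) (ρR / (2 * pR))) = avg ρL ρR :=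
    div_mul_cancel₀ _ (by unfold avg; positivity)
  rw [Psi1_eq γ c_h ψR hpR.ne', Psi1_eq γ c_h ψL hpL.ne', Fin.sum_univ_succ,
    entW9_zero_eq γ ψR hγ.ne' hρR hpR, entW9_zero_eq γ ψL hγ.ne' hρL hpL]
  -- `mul_inv` splits `(2 (γ - 1) β^ln)⁻¹`, so that `ring` sees the factor `β^ln⁻¹` of `hβln`
  simp only [fluxEC, entW9, PhiJ, Fin.sum_univ_succ, Fin.sum_univ_zero,
    Matrix.cons_val_zero, Matrix.cons_val_succ, Fin.succ_zero_eq_one, Fin.succ_one_eq_two,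
    one_div, mul_inv]
  unfold avg at *
  linear_combination (vL 0 + vR 0) / 2 * hρln
    - lnMean ρL ρR * ((vL 0 + vR 0) / 2) / (γ - 1) * hβln + (vR 0 - vL 0) * hpbar
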